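/- Let c be an ad-nilpotent ideal of b and α a simple root. Then: (i) (|c|,α) ≥ 0; (ii) the root space g_{−α} is contained in the normalizer n_g(c) if and only if (|c|,α) = 0; (iii) (|c|,α) = 0 if and only if (Σ_{k≥1} |c^k|, α) = 0, where c¹ = c and c^k = [c^{k−1}, c] for k ≥ 2. In particular the weight |c| is a dominant weight and the normalizer n_g(c) is completely determined by |c|. -/

import Mathlib

open scoped RealInnerProductSpace
open scoped Classical

set_option linter.unusedSectionVars false

noncomputable section

/-- Axiomatization of the root system (with a fixed base and positive system) of a
complex simple Lie algebra `g` with Cartan subalgebra `t ⊆ b`: a finite, reduced,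
crystallographic root system, invariant under its reflections, in a euclidean vector
space `V` (the real span of the roots, with a Weyl-group-invariant inner product),
together with the set `Pi` of simple roots and the set `Δpos` of positive roots. -/
structure RootSystemData (V : Type*) [NormedAddCommGroup V] [InnerProductSpace ℝ V]
    [FiniteDimensional ℝ V] where
  /-- the set of all roots -/
  Δ : Finset V
  /-- the set of simple roots -/
  Pi : Finset V
  /-- the set of positive roots -/
  Δpos : Finset V
  zero_not_mem : (0 : V) ∉ Δ
  neg_mem : ∀ ⦃α⦄, α ∈ Δ → -α ∈ Δ
  reflect_mem : ∀ ⦃α⦄, α ∈ Δ → ∀ ⦃β⦄, β ∈ Δ → β - (2 * ⟪β, α⟫ / ⟪α, α⟫) • α ∈ Δ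
  crystallographic : ∀ ⦃α⦄, α ∈ Δ → ∀ ⦃β⦄, β ∈ Δ → ∃ n : ℤ, 2 * ⟪β, α⟫ = n * ⟪α, α⟫
  reduced : ∀ ⦃α⦄, α ∈ Δ → ∀ t : ℝ, t • α ∈ Δ → t = 1 ∨ t = -1
  Pi_subset : Pi ⊆ Δpos
  Pi_indep : LinearIndependent ℝ (Subtype.val : {x : V // x ∈ Pi} → V)
  Pi_span : Submodule.span ℝ (Pi : Set V) = ⊤
  Δpos_subset : Δpos ⊆ Δ
  mem_Δpos_iff : ∀ ⦃γ⦄, γ ∈ Δ →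
    (γ ∈ Δpos ↔ ∃ c : V → ℕ, γ = ∑ α ∈ Pi, (c α : ℝ) • α)
  pos_or_neg : ∀ ⦃γ⦄, γ ∈ Δ → γ ∈ Δpos ∨ -γ ∈ Δpos

variable {V : Type*} [NormedAddCommGroup V] [InnerProductSpace ℝ V] [FiniteDimensional ℝ V]

/-- `θ` is the highest root: `θ ∈ Δ⁺` and `γ ≼ θ` for every positive root `γ`. -/
def RootSystemData.IsHighestRoot (R : RootSystemData V) (θ : V) : Prop :=
  θ ∈ R.Δpos ∧ ∀ γ ∈ R.Δpos, ∃ c : V → ℕ, θ - γ = ∑ α ∈ R.Pi, (c α : ℝ) • α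

/-- An upper ideal of the root poset `(Δ⁺, ≼)`: a subset `I ⊆ Δ⁺` such that if
`γ ∈ I`, `μ ∈ Δ⁺` and `γ + μ` is a root, then `γ + μ ∈ I`.  Upper ideals correspond
bijectively to the ad-nilpotent ideals `c = ⊕_{γ ∈ I} g_γ` of the Borel subalgebra
`b` (the ideals of `b` contained in `u = [b, b]`). -/
def RootSystemData.IsUpperIdeal (R : RootSystemData V) (I : Finset V) : Prop :=
  I ⊆ R.Δpos ∧ ∀ γ ∈ I, ∀ μ ∈ R.Δpos, γ + μ ∈ R.Δ → γ + μ ∈ I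

/-- The weight `|c| = Σ_{γ ∈ I_c} γ` of an ad-nilpotent ideal. -/
def idealWeight {V : Type*} [NormedAddCommGroup V] [InnerProductSpace ℝ V]
    [FiniteDimensional ℝ V] (I : Finset V) : V := ∑ γ ∈ I, γ

/-- The condition `g_{-α} ⊆ n_g(c)` for a simple root `α` and the ad-nilpotent ideal
`c = ⊕_{γ ∈ I} g_γ`.  Since `[g_{-α}, g_γ] = g_{γ-α}` when `γ - α` is a root,
`[g_{-α}, g_α] ⊆ t` and `[g_{-α}, g_γ] = 0` otherwise (and `γ - α ∈ Δ` with
`γ ∈ Δ⁺`, `α` simple forces `γ - α ∈ Δ⁺`), the root space `g_{-α}` normalizes `c`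
if and only if `α ∉ I` and `I` is closed under subtracting `α` inside `Δ`.
(The normalizer `n_g(c)` is the standard parabolic subalgebra generated by `b` and
those `g_{-α}`, `α ∈ Π`, satisfying this condition.) -/
def RootSystemData.NegSimpleRootInNormalizer (R : RootSystemData V) (I : Finset V)
    (α : V) : Prop :=
  α ∉ I ∧ ∀ γ ∈ I, γ - α ∈ R.Δ → γ - α ∈ I

/-- The root sets of the lower central series `c¹ = c`, `c^{k+1} = [c^k, c]` of an
ad-nilpotent ideal: since `[g_γ, g_μ] = g_{γ+μ}` when `γ + μ` is a root, the root
set of `c^{k+1}` is `{γ + μ ∈ Δ : γ ∈ I_{c^k}, μ ∈ I_c}`.  Here `lcs I k` is the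
root set of `c^{k+1}`. -/
def RootSystemData.lcs (R : RootSystemData V) (I : Finset V) : ℕ → Finset V
  | 0 => I
  | (k+1) => R.Δpos.filter fun β => ∃ γ ∈ R.lcs I k, ∃ μ ∈ I, β = γ + μ

/-!
Let `s` be the reflection in the hyperplane `α⊥`. In `(|c|, α) = Σ_{β ∈ I} (β, α)` the terms of
`β` and `s β` cancel whenever both lie in `I`, so only the `β ∈ I` with `s β ∉ I` contribute.
Root strings are unbroken, hence an upper ideal contains the whole `α`-string above each of its
roots, in particular `s β` when `(β, α) < 0`; so every surviving term is positive. This gives (i),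
and `(|c|, α) = 0` exactly when `I` is `s`-stable, which by the same string argument (going down)
is the normalizer condition (ii). Each `c^k` is again an upper ideal (the root-theoretic shadow of
the Jacobi identity), and `s`-stability of `I` passes to every `c^k` because `s` is additive and
preserves roots; as the series terminates, (iii) follows by applying (i) to each `c^k`.
-/

lemma reflection_orthogonal_singleton_apply (α x : V) :
    (ℝ ∙ α)ᗮ.reflection x = x - (2 * ⟪x, α⟫ / ⟪α, α⟫) • α := by
  rw [Submodule.reflection_orthogonal_apply, Submodule.reflection_singleton_apply,
    real_inner_comm, real_inner_self_eq_norm_sq]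
  simp only [RCLike.ofReal_real_eq_id, id, two_smul]
  module

lemma reflection_orthogonal_singleton_neg (α x : V) :
    (ℝ ∙ -α)ᗮ.reflection x = (ℝ ∙ α)ᗮ.reflection x := by
  simp only [reflection_orthogonal_singleton_apply, inner_neg_right, inner_neg_left, neg_neg,
    smul_neg, neg_div, mul_neg, neg_smul]

lemma inner_reflection_orthogonal_singleton (α x : V) :
    ⟪(ℝ ∙ α)ᗮ.reflection x, α⟫ = -⟪x, α⟫ := by
  have h := (ℝ ∙ α)ᗮ.reflection.inner_map_map x α
  rw [Submodule.reflection_orthogonalComplement_singleton_eq_neg, inner_neg_right] at h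
  linarith

lemma reflection_orthogonal_singleton_eq_self_iff (α x : V) :
    (ℝ ∙ α)ᗮ.reflection x = x ↔ ⟪x, α⟫ = 0 := by
  rw [Submodule.reflection_eq_self_iff, Submodule.mem_orthogonal_singleton_iff_inner_left]

lemma inner_idealWeight_eq_sum_filter (J : Finset V) (α : V) :
    ⟪idealWeight J, α⟫ = ∑ β ∈ J with (ℝ ∙ α)ᗮ.reflection β ∉ J, ⟪β, α⟫ := by
  set s := (ℝ ∙ α)ᗮ.reflection
  have hcancel : ∑ β ∈ J with s β ∈ J, ⟪β, α⟫ = 0 := by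
    refine Finset.sum_involution (fun β _ => s β) (fun β _ => ?_) (fun β _ hne h => ?_)
      (fun β hβ => ?_) (fun β _ => Submodule.reflection_reflection _ β)
    · rw [inner_reflection_orthogonal_singleton, add_neg_cancel]
    · exact hne ((reflection_orthogonal_singleton_eq_self_iff α β).1 h)
    · rw [Finset.mem_filter] at hβ ⊢
      exact ⟨hβ.2, by rw [Submodule.reflection_reflection]; exact hβ.1⟩
  rw [idealWeight, sum_inner, ← Finset.sum_filter_add_sum_filter_not J (fun β => s β ∈ J),
    hcancel, zero_add]

section ReflectionClosed

variable {J : Finset V} {α : V}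

lemma inner_pos_of_reflection_notMem
    (hcl : ∀ β ∈ J, ⟪β, α⟫ < 0 → (ℝ ∙ α)ᗮ.reflection β ∈ J) {β : V} (hβ : β ∈ J)
    (hsβ : (ℝ ∙ α)ᗮ.reflection β ∉ J) : 0 < ⟪β, α⟫ := by
  rcases lt_trichotomy ⟪β, α⟫ 0 with h | h | h
  · exact absurd (hcl β hβ h) hsβ
  · rw [(reflection_orthogonal_singleton_eq_self_iff α β).2 h] at hsβ
    exact absurd hβ hsβ
  · exact h

lemma inner_idealWeight_nonneg (hcl : ∀ β ∈ J, ⟪β, α⟫ < 0 → (ℝ ∙ α)ᗮ.reflection β ∈ J) :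
    0 ≤ ⟪idealWeight J, α⟫ := by
  rw [inner_idealWeight_eq_sum_filter]
  refine Finset.sum_nonneg fun β hβ => ?_
  rw [Finset.mem_filter] at hβ
  exact (inner_pos_of_reflection_notMem hcl hβ.1 hβ.2).le

lemma inner_idealWeight_eq_zero_iff
    (hcl : ∀ β ∈ J, ⟪β, α⟫ < 0 → (ℝ ∙ α)ᗮ.reflection β ∈ J) :
    ⟪idealWeight J, α⟫ = 0 ↔ ∀ β ∈ J, (ℝ ∙ α)ᗮ.reflection β ∈ J := by
  have hpos β (hβ : β ∈ J) (hsβ : (ℝ ∙ α)ᗮ.reflection β ∉ J) : 0 < ⟪β, α⟫ :=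
    inner_pos_of_reflection_notMem hcl hβ hsβ
  rw [inner_idealWeight_eq_sum_filter, Finset.sum_eq_zero_iff_of_nonneg fun β hβ =>
    (hpos β (Finset.mem_filter.1 hβ).1 (Finset.mem_filter.1 hβ).2).le]
  constructor
  · intro h β hβ
    by_contra hsβ
    exact (hpos β hβ hsβ).ne' (h β (Finset.mem_filter.2 ⟨hβ, hsβ⟩))
  · intro h β hβ
    exact absurd (h β (Finset.mem_filter.1 hβ).1) (Finset.mem_filter.1 hβ).2

end ReflectionClosed

namespace RootSystemData

variable (R : RootSystemData V)

lemma ne_zero_of_mem {γ : V} (h : γ ∈ R.Δ) : γ ≠ 0 := fun e => R.zero_not_mem (e ▸ h)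

lemma inner_self_pos {γ : V} (h : γ ∈ R.Δ) : 0 < ⟪γ, γ⟫ :=
  real_inner_self_pos.2 (R.ne_zero_of_mem h)

lemma reflection_mem {α x : V} (hα : α ∈ R.Δ) (hx : x ∈ R.Δ) :
    (ℝ ∙ α)ᗮ.reflection x ∈ R.Δ := by
  rw [reflection_orthogonal_singleton_apply]
  exact R.reflect_mem hα hx

lemma exists_reflection_eq_add_nsmul {α x : V} (hα : α ∈ R.Δ) (hx : x ∈ R.Δ)
    (h : ⟪x, α⟫ ≤ 0) : ∃ m : ℕ, (ℝ ∙ α)ᗮ.reflection x = x + m • α := by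
  obtain ⟨n, hn⟩ := R.crystallographic hα hx
  have hαα := R.inner_self_pos hα
  have hn0 : (n : ℝ) ≤ 0 := by nlinarith
  obtain ⟨m, rfl⟩ := Int.exists_eq_neg_ofNat (by exact_mod_cast hn0 : n ≤ 0)
  refine ⟨m, ?_⟩
  rw [reflection_orthogonal_singleton_apply, hn, mul_div_assoc, div_self hαα.ne', mul_one,
    ← Nat.cast_smul_eq_nsmul ℝ]
  push_cast
  rw [neg_smul, sub_neg_eq_add]

lemma eq_of_inner_eq_norm_mul {β δ : V} (hβ : β ∈ R.Δ) (hδ : δ ∈ R.Δ)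
    (h : ⟪β, δ⟫ = ‖β‖ * ‖δ‖) : β = δ := by
  have hβ0 : 0 < ‖β‖ := norm_pos_iff.2 (R.ne_zero_of_mem hβ)
  have hδ0 : 0 < ‖δ‖ := norm_pos_iff.2 (R.ne_zero_of_mem hδ)
  have hβδ : β = (‖β‖ / ‖δ‖) • δ := by
    rw [div_eq_inv_mul, mul_smul, ← inner_eq_norm_mul_iff_real.1 h, smul_smul,
      inv_mul_cancel₀ hδ0.ne', one_smul]
  rcases R.reduced hδ _ (hβδ ▸ hβ) with h1 | h1
  · rwa [h1, one_smul] at hβδ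
  · have : 0 < ‖β‖ / ‖δ‖ := by positivity
    linarith

lemma sub_mem_of_inner_pos {β δ : V} (hβ : β ∈ R.Δ) (hδ : δ ∈ R.Δ) (hpos : 0 < ⟪β, δ⟫)
    (hne : β ≠ δ) : β - δ ∈ R.Δ := by
  obtain ⟨n, hn⟩ := R.crystallographic hδ hβ
  obtain ⟨m, hm⟩ := R.crystallographic hβ hδ
  rw [real_inner_comm] at hm
  have hδδ := R.inner_self_pos hδ
  have hββ := R.inner_self_pos hβ
  have hn1 : 1 ≤ n := by
    have : (0 : ℝ) < n := by nlinarith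
    exact_mod_cast this
  have hm1 : 1 ≤ m := by
    have : (0 : ℝ) < m := by nlinarith
    exact_mod_cast this
  rcases hn1.eq_or_lt with rfl | hn2
  · have := R.reflect_mem hδ hβ
    rwa [hn, Int.cast_one, one_mul, div_self hδδ.ne', one_smul] at this
  rcases hm1.eq_or_lt with rfl | hm2
  · have := R.neg_mem (R.reflect_mem hβ hδ)
    rwa [real_inner_comm, hm, Int.cast_one, one_mul, div_self hββ.ne', one_smul,
      neg_sub] at this
  -- both Cartan integers are at least 2, which forces equality in Cauchy–Schwarz
  refine absurd (R.eq_of_inner_eq_norm_mul hβ hδ ?_) hne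
  have h4 : (4 : ℝ) ≤ n * m := by exact_mod_cast (show (4 : ℤ) ≤ n * m by nlinarith)
  have hprod : 4 * ⟪β, δ⟫ ^ 2 = (n * m) * (⟪δ, δ⟫ * ⟪β, β⟫) := by
    linear_combination (2 * ⟪β, δ⟫) * hm + (m * ⟪β, β⟫) * hn
  have hsq : (‖β‖ * ‖δ‖) ^ 2 ≤ ⟪β, δ⟫ ^ 2 := by
    rw [mul_pow, ← real_inner_self_eq_norm_sq, ← real_inner_self_eq_norm_sq]
    nlinarith [mul_le_mul_of_nonneg_right h4 (mul_pos hδδ hββ).le]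
  exact le_antisymm (real_inner_le_norm β δ)
    ((pow_le_pow_iff_left₀ (by positivity) hpos.le two_ne_zero).1 hsq)

lemma add_mem_of_inner_neg {β δ : V} (hβ : β ∈ R.Δ) (hδ : δ ∈ R.Δ) (hneg : ⟪β, δ⟫ < 0)
    (hne : β ≠ -δ) : β + δ ∈ R.Δ := by
  simpa using R.sub_mem_of_inner_pos hβ (R.neg_mem hδ) (by rwa [inner_neg_right, neg_pos]) hne

/-- The shadow on roots of the Jacobi identity
`[[x_γ, x_μ], x_ν] = [[x_γ, x_ν], x_μ] + [x_γ, [x_μ, x_ν]]`. -/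
lemma add_mem_or_add_mem_of_add_add_mem {γ μ ν : V} (hγ : γ ∈ R.Δ) (hμ : μ ∈ R.Δ)
    (hν : ν ∈ R.Δ) (hγμ : γ + μ ∈ R.Δ) (hγμν : γ + μ + ν ∈ R.Δ) (hγν : γ ≠ -ν)
    (hμν : μ ≠ -ν) : γ + ν ∈ R.Δ ∨ μ + ν ∈ R.Δ := by
  by_contra! h
  obtain ⟨hγν', hμν'⟩ := h
  have h1 : 0 ≤ ⟪γ, ν⟫ := not_lt.1 fun hlt => hγν' (R.add_mem_of_inner_neg hγ hν hlt hγν)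
  have h2 : 0 ≤ ⟪μ, ν⟫ := not_lt.1 fun hlt => hμν' (R.add_mem_of_inner_neg hμ hν hlt hμν)
  have h3 : ⟪γ + μ + ν, γ⟫ ≤ 0 := by
    refine not_lt.1 fun hlt => hμν' ?_
    have hne : γ + μ + ν ≠ γ := fun e => hμν (eq_neg_of_add_eq_zero_left (by
      rw [show μ + ν = γ + μ + ν - γ by abel, e, sub_self]))
    simpa [add_assoc] using R.sub_mem_of_inner_pos hγμν hγ hlt hne
  have h4 : ⟪γ + μ + ν, μ⟫ ≤ 0 := by
    refine not_lt.1 fun hlt => hγν' ?_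
    have hne : γ + μ + ν ≠ μ := fun e => hγν (eq_neg_of_add_eq_zero_left (by
      rw [show γ + ν = γ + μ + ν - μ by abel, e, sub_self]))
    simpa [add_right_comm γ μ ν] using R.sub_mem_of_inner_pos hγμν hμ hlt hne
  have hnorm : ⟪γ + μ, γ + μ⟫ = ⟪γ + μ + ν, γ⟫ + ⟪γ + μ + ν, μ⟫ - ⟪γ, ν⟫ - ⟪μ, ν⟫ := by
    simp only [inner_add_left, inner_add_right, real_inner_comm γ ν, real_inner_comm μ ν]
    ring
  linarith [R.inner_self_pos hγμ]

lemma add_mem_or_add_nsmul_mem {x δ : V} (hδ : δ ∈ R.Δ) (hx : x ∈ R.Δ) (hxδ : x ∉ ℝ ∙ δ)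
    {k : ℕ} (hk : x + (k + 1) • δ ∈ R.Δ) : x + δ ∈ R.Δ ∨ x + k • δ ∈ R.Δ := by
  by_contra! h
  have hx_ne : x ≠ -δ := fun e =>
    hxδ (e ▸ Submodule.neg_mem _ (Submodule.mem_span_singleton_self δ))
  have hy_ne : x + (k + 1) • δ ≠ δ := fun e => hxδ <| by
    rw [eq_sub_of_add_eq e]
    exact Submodule.sub_mem _ (Submodule.mem_span_singleton_self δ)
      (Submodule.smul_of_tower_mem _ _ (Submodule.mem_span_singleton_self δ))
  have h1 : 0 ≤ ⟪x, δ⟫ := not_lt.1 fun hlt => h.1 (R.add_mem_of_inner_neg hx hδ hlt hx_ne)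
  have h2 : ⟪x + (k + 1) • δ, δ⟫ ≤ 0 := not_lt.1 fun hlt => h.2 <| by
    simpa [succ_nsmul, ← add_assoc] using R.sub_mem_of_inner_pos hk hδ hlt hy_ne
  rw [← Nat.cast_smul_eq_nsmul ℝ, inner_add_left, real_inner_smul_left] at h2
  have := R.inner_self_pos hδ
  push_cast at h2
  nlinarith

lemma add_nsmul_mem_of_le {δ : V} (hδ : δ ∈ R.Δ) {n : ℕ} :
    ∀ {x : V}, x ∈ R.Δ → x ∉ ℝ ∙ δ → x + n • δ ∈ R.Δ → ∀ j ≤ n, x + j • δ ∈ R.Δ := by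
  induction n with
  | zero =>
    intro x hx _ _ j hj
    rwa [Nat.le_zero.1 hj, zero_smul, add_zero]
  | succ k ih =>
    intro x hx hxδ hn j hj
    rcases R.add_mem_or_add_nsmul_mem hδ hx hxδ hn with hx1 | hxk
    · have hx1δ : x + δ ∉ ℝ ∙ δ := fun h =>
        hxδ (by simpa using Submodule.sub_mem _ h (Submodule.mem_span_singleton_self δ))
      rcases j with _ | i
      · simpa using hx
      · have := ih hx1 hx1δ (by rwa [add_assoc, ← succ_nsmul']) i (by omega)
        rwa [add_assoc, ← succ_nsmul'] at this
    · rcases (Nat.le_succ_iff.1 hj) with hjk | rfl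
      · exact ih hx hxδ hxk j hjk
      · exact hn

lemma add_nsmul_mem_of_forall_add_mem {J : Finset V} {δ x : V} (hδ : δ ∈ R.Δ)
    (hJ : ∀ β ∈ J, β + δ ∈ R.Δ → β + δ ∈ J) (hxJ : x ∈ J) (hx : x ∈ R.Δ) (hxδ : x ∉ ℝ ∙ δ)
    {n : ℕ} (hn : x + n • δ ∈ R.Δ) : x + n • δ ∈ J := by
  have hstring := R.add_nsmul_mem_of_le hδ hx hxδ hn
  suffices ∀ j ≤ n, x + j • δ ∈ J from this n le_rfl
  intro j
  induction j with
  | zero => simpa using hxJ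
  | succ j ih =>
    intro hj
    have hΔ := hstring (j + 1) hj
    rw [succ_nsmul, ← add_assoc] at hΔ ⊢
    exact hJ _ (ih (by omega)) hΔ

lemma reflection_mem_of_forall_add_mem {J : Finset V} {δ x : V} (hδ : δ ∈ R.Δ)
    (hJ : ∀ β ∈ J, β + δ ∈ R.Δ → β + δ ∈ J) (hxJ : x ∈ J) (hx : x ∈ R.Δ) (hxδ : x ∉ ℝ ∙ δ)
    (hnonpos : ⟪x, δ⟫ ≤ 0) : (ℝ ∙ δ)ᗮ.reflection x ∈ J := by
  obtain ⟨m, hm⟩ := R.exists_reflection_eq_add_nsmul hδ hx hnonpos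
  rw [hm]
  exact R.add_nsmul_mem_of_forall_add_mem hδ hJ hxJ hx hxδ (hm ▸ R.reflection_mem hδ hx)

def height : V →ₗ[ℝ] ℝ :=
  (Module.Basis.mk R.Pi_indep (by rw [Subtype.range_val]; exact R.Pi_span.ge)).sumCoords

lemma height_of_mem_Pi {α : V} (hα : α ∈ R.Pi) : R.height α = 1 := by
  have h := (Module.Basis.mk R.Pi_indep
    (by rw [Subtype.range_val]; exact R.Pi_span.ge)).sumCoords_self_apply ⟨α, hα⟩
  rwa [Module.Basis.mk_apply] at h

lemma one_le_height {γ : V} (hγ : γ ∈ R.Δpos) : 1 ≤ R.height γ := by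
  obtain ⟨c, hc⟩ := (R.mem_Δpos_iff (R.Δpos_subset hγ)).1 hγ
  have hheight : R.height γ = ((∑ α ∈ R.Pi, c α : ℕ) : ℝ) := by
    rw [hc, map_sum]
    push_cast
    refine Finset.sum_congr rfl fun α hα => ?_
    rw [map_smul, R.height_of_mem_Pi hα, smul_eq_mul, mul_one]
  rw [hheight, Nat.one_le_cast, Nat.one_le_iff_ne_zero]
  intro h0
  rw [Finset.sum_eq_zero_iff] at h0
  refine R.ne_zero_of_mem (R.Δpos_subset hγ) ?_
  rw [hc]
  exact Finset.sum_eq_zero fun α hα => by rw [h0 α hα, Nat.cast_zero, zero_smul]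

lemma neg_notMem_Δpos {γ : V} (hγ : γ ∈ R.Δpos) : -γ ∉ R.Δpos := fun h => by
  have := R.one_le_height h
  rw [map_neg] at this
  linarith [R.one_le_height hγ]

lemma ne_neg_of_mem_Δpos {x y : V} (hx : x ∈ R.Δpos) (hy : y ∈ R.Δpos) : x ≠ -y :=
  fun e => R.neg_notMem_Δpos hy (e ▸ hx)

lemma add_mem_Δpos {x y : V} (hx : x ∈ R.Δpos) (hy : y ∈ R.Δpos) (hxy : x + y ∈ R.Δ) :
    x + y ∈ R.Δpos := by
  refine (R.pos_or_neg hxy).resolve_right fun h => ?_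
  have := R.one_le_height h
  rw [map_neg, map_add] at this
  linarith [R.one_le_height hx, R.one_le_height hy]

lemma notMem_span_singleton_of_mem_Δpos {α β : V} (hβ : β ∈ R.Δpos) (hα : α ∈ R.Δpos)
    (hne : β ≠ α) : β ∉ ℝ ∙ α := by
  intro h
  obtain ⟨t, rfl⟩ := Submodule.mem_span_singleton.1 h
  rcases R.reduced (R.Δpos_subset hα) t (R.Δpos_subset hβ) with rfl | rfl
  · exact hne (one_smul _ _)
  · exact R.neg_notMem_Δpos hα (by simpa using hβ)

variable {R} {I : Finset V}

lemma IsUpperIdeal.reflection_mem_of_inner_nonpos (hI : R.IsUpperIdeal I) {α β : V}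
    (hα : α ∈ R.Δpos) (hβ : β ∈ I) (hnonpos : ⟪β, α⟫ ≤ 0) : (ℝ ∙ α)ᗮ.reflection β ∈ I := by
  have hne : β ≠ α := by
    rintro rfl
    linarith [R.inner_self_pos (R.Δpos_subset hα)]
  exact R.reflection_mem_of_forall_add_mem (R.Δpos_subset hα) (fun γ hγ => hI.2 γ hγ α hα) hβ
    (R.Δpos_subset (hI.1 hβ)) (R.notMem_span_singleton_of_mem_Δpos (hI.1 hβ) hα hne) hnonpos

lemma negSimpleRootInNormalizer_iff (hI : R.IsUpperIdeal I) {α : V} (hα : α ∈ R.Δpos) :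
    R.NegSimpleRootInNormalizer I α ↔ ∀ β ∈ I, (ℝ ∙ α)ᗮ.reflection β ∈ I := by
  have hαΔ := R.Δpos_subset hα
  have hsα : (ℝ ∙ α)ᗮ.reflection α = -α :=
    Submodule.reflection_orthogonalComplement_singleton_eq_neg α
  constructor
  · rintro ⟨hαI, hsub⟩ β hβ
    rcases le_or_gt ⟪β, α⟫ 0 with hle | hgt
    · exact hI.reflection_mem_of_inner_nonpos hα hβ hle
    · have hβα := R.notMem_span_singleton_of_mem_Δpos (hI.1 hβ) hα (ne_of_mem_of_not_mem hβ hαI)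
      rw [← reflection_orthogonal_singleton_neg]
      refine R.reflection_mem_of_forall_add_mem (R.neg_mem hαΔ)
        (fun γ hγ => by simpa only [← sub_eq_add_neg] using hsub γ hγ) hβ
        (R.Δpos_subset (hI.1 hβ)) (by rwa [← Set.neg_singleton, Submodule.span_neg]) ?_
      rw [inner_neg_right]
      linarith
  · intro hst
    refine ⟨fun hαI => R.neg_notMem_Δpos hα (hI.1 (hsα ▸ hst α hαI)), fun γ hγ hγα => ?_⟩
    -- `s (γ - α) = s γ + α` is a root above `s γ ∈ I`, so it lies in `I`, and so does its image
    have hup : (ℝ ∙ α)ᗮ.reflection γ + α ∈ I := by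
      refine hI.2 _ (hst γ hγ) α hα ?_
      have := R.reflection_mem hαΔ hγα
      rwa [map_sub, hsα, sub_neg_eq_add] at this
    have := hst _ hup
    rwa [map_add, Submodule.reflection_reflection, hsα, ← sub_eq_add_neg] at this

lemma lcs_subset_Δpos (hI : R.IsUpperIdeal I) : ∀ k, R.lcs I k ⊆ R.Δpos
  | 0 => hI.1
  | _ + 1 => Finset.filter_subset _ _

lemma IsUpperIdeal.lcs (hI : R.IsUpperIdeal I) (k : ℕ) : R.IsUpperIdeal (R.lcs I k) := by
  induction k with
  | zero => exact hI
  | succ k ih =>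
    refine ⟨Finset.filter_subset _ _, fun β hβ ν hν hβν => ?_⟩
    obtain ⟨hβpos, γ, hγ, μ, hμ, rfl⟩ := Finset.mem_filter.1 hβ
    have hγpos := lcs_subset_Δpos hI k hγ
    have hμpos := hI.1 hμ
    refine Finset.mem_filter.2 ⟨R.add_mem_Δpos hβpos hν hβν, ?_⟩
    rcases R.add_mem_or_add_mem_of_add_add_mem (R.Δpos_subset hγpos) (R.Δpos_subset hμpos)
      (R.Δpos_subset hν) (R.Δpos_subset hβpos) hβν (R.ne_neg_of_mem_Δpos hγpos hν)
      (R.ne_neg_of_mem_Δpos hμpos hν) with h | h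
    · exact ⟨γ + ν, ih.2 γ hγ ν hν h, μ, hμ, by abel⟩
    · exact ⟨γ, hγ, μ + ν, hI.2 μ hμ ν hν h, by abel⟩

lemma IsUpperIdeal.reflection_mem_lcs (hI : R.IsUpperIdeal I) {α : V} (hα : α ∈ R.Δ)
    (hst : ∀ β ∈ I, (ℝ ∙ α)ᗮ.reflection β ∈ I) (k : ℕ) :
    ∀ β ∈ R.lcs I k, (ℝ ∙ α)ᗮ.reflection β ∈ R.lcs I k := by
  induction k with
  | zero => exact hst
  | succ k ih =>
    intro β hβ
    obtain ⟨hβpos, γ, hγ, μ, hμ, rfl⟩ := Finset.mem_filter.1 hβ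
    have hΔ := R.reflection_mem hα (R.Δpos_subset hβpos)
    rw [map_add] at hΔ ⊢
    exact Finset.mem_filter.2 ⟨R.add_mem_Δpos (lcs_subset_Δpos hI k (ih γ hγ))
      (hI.1 (hst μ hμ)) hΔ, _, ih γ hγ, _, hst μ hμ, rfl⟩

lemma add_one_le_height_of_mem_lcs (hI : R.IsUpperIdeal I) (k : ℕ) :
    ∀ β ∈ R.lcs I k, (k : ℝ) + 1 ≤ R.height β := by
  induction k with
  | zero =>
    intro β hβ
    simpa using R.one_le_height (hI.1 hβ)
  | succ k ih =>
    intro β hβ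
    obtain ⟨-, γ, hγ, μ, hμ, rfl⟩ := Finset.mem_filter.1 hβ
    rw [map_add]
    push_cast
    linarith [ih γ hγ, R.one_le_height (hI.1 hμ)]

lemma IsUpperIdeal.exists_lcs_eq_empty (hI : R.IsUpperIdeal I) :
    ∃ N : ℕ, ∀ k, N ≤ k → R.lcs I k = ∅ := by
  obtain ⟨B, hB⟩ := (R.Δpos.image R.height).bddAbove
  refine ⟨⌈B⌉₊, fun k hk => Finset.eq_empty_of_forall_notMem fun β hβ => ?_⟩
  have hβB := hB (Finset.mem_coe.2 (Finset.mem_image_of_mem _ (lcs_subset_Δpos hI k hβ)))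
  have hBk : B ≤ k := (Nat.le_ceil B).trans (by exact_mod_cast hk)
  linarith [add_one_le_height_of_mem_lcs hI k β hβ]

end RootSystemData

open RootSystemData

/-- Theorem 2.3.  Let `c` be an ad-nilpotent ideal of `b` (with
root set `I`) and `α` a simple root.  Then
(i) `(|c|, α) ≥ 0`;
(ii) `g_{-α} ⊆ n_g(c)` if and only if `(|c|, α) = 0`;
(iii) `(|c|, α) = 0` if and only if `(Σ_{k ≥ 1} |c^k|, α) = 0`, where `c¹ = c` and
`c^k = [c^{k-1}, c]`.
In particular `|c|` is dominant and `n_g(c)` is completely determined by `|c|`. -/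
theorem weight_dominant_and_normalizer_criterion
    {V : Type*} [NormedAddCommGroup V] [InnerProductSpace ℝ V] [FiniteDimensional ℝ V]
    (R : RootSystemData V) (I : Finset V) (hI : R.IsUpperIdeal I)
    (α : V) (hα : α ∈ R.Pi) :
    0 ≤ ⟪idealWeight I, α⟫ ∧
    (R.NegSimpleRootInNormalizer I α ↔ ⟪idealWeight I, α⟫ = 0) ∧
    (⟪idealWeight I, α⟫ = 0 ↔ ⟪∑ᶠ k : ℕ, idealWeight (R.lcs I k), α⟫ = 0) := by
  have hαpos := R.Pi_subset hα
  have hcl (k : ℕ) : ∀ β ∈ R.lcs I k, ⟪β, α⟫ < 0 → (ℝ ∙ α)ᗮ.reflection β ∈ R.lcs I k :=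
    fun β hβ hneg => (hI.lcs k).reflection_mem_of_inner_nonpos hαpos hβ hneg.le
  have hzero_iff (k : ℕ) := inner_idealWeight_eq_zero_iff (hcl k)
  obtain ⟨N, hN⟩ := hI.exists_lcs_eq_empty
  have hsupp : Function.support (fun k => idealWeight (R.lcs I k)) ⊆ Finset.range (N + 1) :=
    fun k hk => Finset.mem_coe.2 <| Finset.mem_range.2 <| by
      by_contra hkN
      exact hk (by simp [idealWeight, hN k (by omega)])
  refine ⟨inner_idealWeight_nonneg (hcl 0),
    (negSimpleRootInNormalizer_iff hI hαpos).trans (hzero_iff 0).symm, ?_⟩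
  rw [finsum_eq_sum_of_support_subset _ hsupp, sum_inner,
    Finset.sum_eq_zero_iff_of_nonneg fun k _ => inner_idealWeight_nonneg (hcl k)]
  refine ⟨fun h0 k _ => ?_, fun h => h 0 (by simp)⟩
  exact (hzero_iff k).2 (hI.reflection_mem_lcs (R.Δpos_subset hαpos) ((hzero_iff 0).1 h0) k)
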